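/- arXiv:1710.10680 — 2 statements merged into one kernel-verified Lean document; each statement's English description precedes it below -/
import Mathlib

section
/- A hyponormal operator whose spectrum is {0} (i.e., a quasinilpotent hyponormal operator) is the zero operator. More generally, a hyponormal operator with spectrum {λ} equals λI. -/
open ContinuousLinearMap

local notation "⟪" x ", " y "⟫" => inner (𝕜 := ℂ) x y

/-- For a hyponormal operator, `‖S† x‖ ≤ ‖S x‖`. -/
lemma hypo_norm_adjoint_le {H : Type*} [NormedAddCommGroup H] [InnerProductSpace ℂ H]
    [CompleteSpace H] (S : H →L[ℂ] H)
    (hS : (adjoint S ∘L S - S ∘L adjoint S).IsPositive) (x : H) :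
    ‖adjoint S x‖ ≤ ‖S x‖ := by
  have h := hS.inner_nonneg_left x
  have h1 : ⟪(adjoint S ∘L S) x, x⟫ = (‖S x‖ : ℂ) ^ 2 := by
    simp only [ContinuousLinearMap.comp_apply, adjoint_inner_left]
    rw [inner_self_eq_norm_sq_to_K]; norm_cast
  have h2 : ⟪(S ∘L adjoint S) x, x⟫ = (‖adjoint S x‖ : ℂ) ^ 2 := by
    have : ⟪S (adjoint S x), x⟫ = ⟪adjoint S x, adjoint S x⟫ := by
      rw [← adjoint_inner_right]
    simpa [ContinuousLinearMap.comp_apply, this] using inner_self_eq_norm_sq_to_K (adjoint S x)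
  have hsub : ((adjoint S ∘L S - S ∘L adjoint S) x) = (adjoint S ∘L S) x - (S ∘L adjoint S) x := rfl
  rw [hsub, inner_sub_left, h1, h2] at h
  have hre : (0:ℝ) ≤ ‖S x‖ ^ 2 - ‖adjoint S x‖ ^ 2 := by
    rw [← Complex.ofReal_pow, ← Complex.ofReal_pow, ← Complex.ofReal_sub, Complex.zero_le_real] at h; exact h
  nlinarith [norm_nonneg (S x), norm_nonneg (adjoint S x)]

/-- Pointwise paranormal inequality for hyponormal operators. -/
lemma hypo_sq_le {H : Type*} [NormedAddCommGroup H] [InnerProductSpace ℂ H]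
    [CompleteSpace H] (S : H →L[ℂ] H)
    (hS : (adjoint S ∘L S - S ∘L adjoint S).IsPositive) (x : H) :
    ‖S x‖ ^ 2 ≤ ‖S (S x)‖ * ‖x‖ := by
  have h1 : (‖S x‖ : ℝ) ^ 2 = ‖⟪adjoint S (S x), x⟫‖ := by
    rw [adjoint_inner_left]
    rw [inner_self_eq_norm_sq_to_K (𝕜 := ℂ) (S x)]
    simp [sq_abs]
  calc ‖S x‖ ^ 2 = ‖⟪adjoint S (S x), x⟫‖ := h1
    _ ≤ ‖adjoint S (S x)‖ * ‖x‖ := norm_inner_le_norm _ _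
    _ ≤ ‖S (S x)‖ * ‖x‖ := by
        gcongr; exact hypo_norm_adjoint_le S hS (S x)

theorem stmt_12 {H : Type*} [NormedAddCommGroup H] [InnerProductSpace ℂ H]
    [CompleteSpace H] (T : H →L[ℂ] H)
    (hT : (adjoint T ∘L T - T ∘L adjoint T).IsPositive) (l : ℂ)
    (hσ : spectrum ℂ T = {l}) :
    T = l • (1 : H →L[ℂ] H) := by
  rcases subsingleton_or_nontrivial H with hsub | hnt
  · exact Subsingleton.elim _ _
  set S : H →L[ℂ] H := T - l • 1 with hSdef
  -- S is hyponormal with the same self-commutator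
  have hadj : adjoint S = adjoint T - (starRingEnd ℂ l) • 1 := by
    rw [hSdef, ← star_eq_adjoint, ← star_eq_adjoint]
    simp [star_smul]
  have hcomm : adjoint S ∘L S - S ∘L adjoint S = adjoint T ∘L T - T ∘L adjoint T := by
    rw [hSdef, hadj]
    simp only [sub_comp, comp_sub, smul_comp, comp_smul, smul_sub, smul_smul,
      ContinuousLinearMap.one_def, comp_id, id_comp]
    rw [mul_comm l ((starRingEnd ℂ) l)]
    abel
  have hS : (adjoint S ∘L S - S ∘L adjoint S).IsPositive := by rw [hcomm]; exact hT
  -- spectrum of S is {0}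
  have hσS : spectrum ℂ S = {0} := by
    have : S = T - algebraMap ℂ (H →L[ℂ] H) l := by
      rw [hSdef, Algebra.algebraMap_eq_smul_one]
    rw [this, ← spectrum.sub_singleton_eq, hσ, Set.singleton_sub_singleton, sub_self]
  have hrad : spectralRadius ℂ S = 0 := by
    simp [spectralRadius, hσS]
  -- operator norm inequality ‖S^(n+1)‖^2 ≤ ‖S^(n+2)‖ * ‖S^n‖
  have key : ∀ n : ℕ, ‖S ^ (n+1)‖ ^ 2 ≤ ‖S ^ (n+2)‖ * ‖S ^ n‖ := by
    intro n
    have hC : (0:ℝ) ≤ ‖S ^ (n+2)‖ * ‖S ^ n‖ := by positivity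
    have hb : ‖S ^ (n+1)‖ ≤ Real.sqrt (‖S ^ (n+2)‖ * ‖S ^ n‖) := by
      apply opNorm_le_bound _ (Real.sqrt_nonneg _)
      intro x
      have hx : ‖(S ^ (n+1)) x‖ ^ 2 ≤ (‖S ^ (n+2)‖ * ‖S ^ n‖) * ‖x‖ ^ 2 := by
        have h1 : (S ^ (n+1)) x = S ((S ^ n) x) := by
          rw [pow_succ']; rfl
        have h2 : S (S ((S ^ n) x)) = (S ^ (n+2)) x := by
          have : S ^ (n+2) = S ∘L (S ∘L S ^ n) := by
            rw [show n + 2 = n + 1 + 1 from rfl, pow_succ', pow_succ']; rfl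
          rw [this]; rfl
        calc ‖(S ^ (n+1)) x‖ ^ 2 = ‖S ((S ^ n) x)‖ ^ 2 := by rw [h1]
          _ ≤ ‖S (S ((S ^ n) x))‖ * ‖(S ^ n) x‖ := hypo_sq_le S hS _
          _ = ‖(S ^ (n+2)) x‖ * ‖(S ^ n) x‖ := by rw [h2]
          _ ≤ (‖S ^ (n+2)‖ * ‖x‖) * (‖S ^ n‖ * ‖x‖) := by
              gcongr <;> exact le_opNorm _ _
          _ = (‖S ^ (n+2)‖ * ‖S ^ n‖) * ‖x‖ ^ 2 := by ring
      have := Real.sqrt_le_sqrt hx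
      rw [Real.sqrt_sq (norm_nonneg _)] at this
      calc ‖(S ^ (n+1)) x‖ ≤ Real.sqrt ((‖S ^ (n+2)‖ * ‖S ^ n‖) * ‖x‖ ^ 2) := this
        _ = Real.sqrt (‖S ^ (n+2)‖ * ‖S ^ n‖) * ‖x‖ := by
            rw [Real.sqrt_mul hC, Real.sqrt_sq (norm_nonneg _)]
    calc ‖S ^ (n+1)‖ ^ 2 ≤ Real.sqrt (‖S ^ (n+2)‖ * ‖S ^ n‖) ^ 2 := by
          gcongr
        _ = ‖S ^ (n+2)‖ * ‖S ^ n‖ := Real.sq_sqrt hC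
  -- hence ‖S‖^n ≤ ‖S^n‖ for all n
  have hpow : ∀ n : ℕ, ‖S‖ ^ n ≤ ‖S ^ n‖ := by
    intro n
    induction n using Nat.strong_induction_on with
    | _ n ih =>
      match n with
      | 0 => simp
      | 1 => simp
      | (m+2) =>
        rcases eq_or_lt_of_le (norm_nonneg S) with h0 | hpos
        · rw [← h0, zero_pow (by omega)]; exact norm_nonneg _
        · have h1 := key m
          have h2 : ‖S ^ m‖ ≤ ‖S‖ ^ m := norm_pow_le S m
          have h3 : ‖S‖ ^ (m+1) ≤ ‖S ^ (m+1)‖ := ih (m+1) (by omega)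
          have h4 : (‖S‖ ^ (m+1)) ^ 2 ≤ ‖S ^ (m+2)‖ * ‖S‖ ^ m := by
            calc (‖S‖ ^ (m+1)) ^ 2 ≤ ‖S ^ (m+1)‖ ^ 2 := by gcongr
              _ ≤ ‖S ^ (m+2)‖ * ‖S ^ m‖ := h1
              _ ≤ ‖S ^ (m+2)‖ * ‖S‖ ^ m := by gcongr
          have h5 : ‖S‖ ^ (m+2) * ‖S‖ ^ m ≤ ‖S ^ (m+2)‖ * ‖S‖ ^ m := by
            calc ‖S‖ ^ (m+2) * ‖S‖ ^ m = (‖S‖ ^ (m+1)) ^ 2 := by ring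
              _ ≤ ‖S ^ (m+2)‖ * ‖S‖ ^ m := h4
          exact le_of_mul_le_mul_right h5 (by positivity)
  -- Gelfand formula forces ‖S‖ = 0
  have hSnorm : ‖S‖ = 0 := by
    by_contra hne
    have hpos : 0 < ‖S‖ := lt_of_le_of_ne (norm_nonneg S) (Ne.symm hne)
    have htend := spectrum.pow_nnnorm_pow_one_div_tendsto_nhds_spectralRadius S
    rw [hrad] at htend
    have hev : ∀ᶠ n : ℕ in Filter.atTop,
        (‖S‖₊ : ENNReal) ≤ (‖S ^ n‖₊ : ENNReal) ^ (1 / (n:ℝ)) := by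
      filter_upwards [Filter.eventually_ge_atTop 1] with n hn
      have h1 : (‖S‖₊ : ENNReal) ^ (n:ℕ) ≤ (‖S ^ n‖₊ : ENNReal) := by
        have := hpow n
        have : ‖S‖₊ ^ n ≤ ‖S ^ n‖₊ := by
          rw [← NNReal.coe_le_coe]
          push_cast
          simpa using this
        exact_mod_cast this
      calc (‖S‖₊ : ENNReal) = ((‖S‖₊ : ENNReal) ^ (n:ℕ)) ^ (1 / (n:ℝ)) := by
            rw [← ENNReal.rpow_natCast, ← ENNReal.rpow_mul,
              mul_one_div, div_self (by exact_mod_cast Nat.one_le_iff_ne_zero.mp hn),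
              ENNReal.rpow_one]
        _ ≤ (‖S ^ n‖₊ : ENNReal) ^ (1 / (n:ℝ)) := by
            apply ENNReal.rpow_le_rpow h1 (by positivity)
    have hle : (‖S‖₊ : ENNReal) ≤ 0 := ge_of_tendsto htend hev
    simp only [nonpos_iff_eq_zero, ENNReal.coe_eq_zero, nnnorm_eq_zero] at hle
    exact hne (by rw [hle]; simp)
  have hS0 : S = 0 := norm_eq_zero.mp hSnorm
  have h : T - l • 1 = 0 := hS0
  exact sub_eq_zero.mp h
end

section
/- For the Drury–Arveson 2-variable weighted shift T = (T₁, T₂) (multiplication by the coordinate functions z₁, z₂ on the Drury–Arveson space of the unit ball in ℂ²), one has ker Q_T(I) = {0} while ker Q_{T*}(I) is one-dimensional (spanned by the constants); hence the quasitriangular property dim ker Q_{T_λ}(I) ≥ dim ker Q_{T*_λ}(I) fails at λ = 0. -/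
open ContinuousLinearMap

/-- Abstract formulation of the Drury–Arveson 2-variable weighted shift
`T = (T₁, T₂)` (multiplication by the coordinates on the Drury–Arveson space):
it is known that `I - Q_T(I) ≤ 0` and that `I - Q_{T*}(I)` is the orthogonal
projection onto the (one-dimensional) space of constants, spanned by the
constant function `e = 1`.  Under these hypotheses, `ker Q_T(I) = {0}` while
`ker Q_{T*}(I)` is one-dimensional, so the quasitriangular property
`dim ker Q_{T_λ}(I) ≥ dim ker Q_{T*_λ}(I)` fails at `λ = 0`. -/
theorem stmt_13 {H : Type*} [NormedAddCommGroup H] [InnerProductSpace ℂ H]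
    [CompleteSpace H] (T₁ T₂ : H →L[ℂ] H) (hcomm : T₁ ∘L T₂ = T₂ ∘L T₁)
    (e : H) (he : e ≠ 0)
    (hQ : ((adjoint T₁ ∘L T₁ + adjoint T₂ ∘L T₂) - 1).IsPositive)
    (hP : (1 : H →L[ℂ] H) - (T₁ ∘L adjoint T₁ + T₂ ∘L adjoint T₂) =
      (Submodule.span ℂ {e}).subtypeL ∘L (Submodule.span ℂ {e}).orthogonalProjectionOnto) :
    LinearMap.ker ((adjoint T₁ ∘L T₁ + adjoint T₂ ∘L T₂ : H →L[ℂ] H) : H →ₗ[ℂ] H) = ⊥ ∧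
    Module.finrank ℂ (LinearMap.ker ((T₁ ∘L adjoint T₁ + T₂ ∘L adjoint T₂ : H →L[ℂ] H) : H →ₗ[ℂ] H)) = 1 ∧
    ¬ (Module.rank ℂ (LinearMap.ker ((T₁ ∘L adjoint T₁ + T₂ ∘L adjoint T₂ : H →L[ℂ] H) : H →ₗ[ℂ] H)) ≤
        Module.rank ℂ (LinearMap.ker ((adjoint T₁ ∘L T₁ + adjoint T₂ ∘L T₂ : H →L[ℂ] H) : H →ₗ[ℂ] H))) := by
  have hkerQ : LinearMap.ker ((adjoint T₁ ∘L T₁ + adjoint T₂ ∘L T₂ : H →L[ℂ] H) : H →ₗ[ℂ] H) = ⊥ := by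
    rw [LinearMap.ker_eq_bot']
    intro x hx
    have h := hQ.2 x
    rw [ContinuousLinearMap.reApplyInnerSelf_apply] at h
    simp only [ContinuousLinearMap.sub_apply, ContinuousLinearMap.one_apply] at h
    rw [show ((adjoint T₁ ∘L T₁ + adjoint T₂ ∘L T₂) : H →L[ℂ] H) x = 0 from hx] at h
    have h2 : RCLike.re (inner ℂ x x) ≤ 0 := by
      simpa [inner_sub_left] using h
    exact re_inner_self_nonpos.mp h2
  have hkerP : LinearMap.ker ((T₁ ∘L adjoint T₁ + T₂ ∘L adjoint T₂ : H →L[ℂ] H) : H →ₗ[ℂ] H) = Submodule.span ℂ {e} := by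
    ext x
    simp only [LinearMap.mem_ker]
    constructor
    · intro hx
      have h := congrArg (fun f : H →L[ℂ] H => f x) hP
      simp only [ContinuousLinearMap.sub_apply, ContinuousLinearMap.one_apply,
        ContinuousLinearMap.comp_apply, Submodule.subtypeL_apply] at h
      rw [show ((T₁ ∘L adjoint T₁ + T₂ ∘L adjoint T₂) : H →L[ℂ] H) x = 0 from hx, sub_zero] at h
      rw [h]
      exact ((Submodule.span ℂ {e}).orthogonalProjectionOnto x).2
    · intro hx
      have h := congrArg (fun f : H →L[ℂ] H => f x) hP
      simp only [ContinuousLinearMap.sub_apply, ContinuousLinearMap.one_apply,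
        ContinuousLinearMap.comp_apply, Submodule.subtypeL_apply] at h
      rw [← Submodule.starProjection_apply, Submodule.starProjection_eq_self_iff.2 hx] at h
      exact sub_eq_self.mp h
  refine ⟨hkerQ, ?_, ?_⟩
  · rw [hkerP]; exact finrank_span_singleton he
  · rw [hkerQ, hkerP]
    intro hle
    have h0 : Module.rank ℂ (⊥ : Submodule ℂ H) = 0 := rank_bot ℂ _
    have h1 : Module.rank ℂ (Submodule.span ℂ {e}) = 1 := by
      rw [← Module.finrank_eq_rank ℂ (Submodule.span ℂ {e}), finrank_span_singleton he, Nat.cast_one]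
    rw [h0, h1] at hle
    exact absurd hle (by norm_num)
end
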